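/- The map μ ↦ μ̃ maps the set of polyconvex measures with compact support in M^{2×2}_+ bijectively onto itself: if μ is a compactly supported Borel probability measure on M^{2×2}_+ with ∫ det X dμ(X) = det(μ̄), then μ̃ is also a compactly supported Borel probability measure on M^{2×2}_+ satisfying ∫ det X dμ̃(X) = det((μ̃)‾), and the map is an involution on this set. -/

import Mathlib

open MeasureTheory

noncomputable section

instance matrixMeasurableSpace {m n : ℕ} : MeasurableSpace (Matrix (Fin m) (Fin n) ℝ) :=
  show MeasurableSpace (Fin m → Fin n → ℝ) from inferInstance

/-- The Jacobian matrix of `φ : ℝⁿ → ℝᵐ` at `x`. -/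
def jacobianM (m n : ℕ) (φ : (Fin n → ℝ) → (Fin m → ℝ)) (x : Fin n → ℝ) :
    Matrix (Fin m) (Fin n) ℝ :=
  Matrix.of fun i j => fderiv ℝ φ x (Pi.single j 1) i

/-- `f : ℝ^{m×n} → ℝ` is quasiconvex: `f` is Borel measurable, locally bounded, and for every
nonempty bounded open `Ω ⊆ ℝⁿ`, every `X₀` and every smooth `φ` compactly supported in `Ω`,
`f X₀ * |Ω| ≤ ∫_Ω f (X₀ + Dφ x) dx`. -/
def IsQuasiconvex {m n : ℕ} (f : Matrix (Fin m) (Fin n) ℝ → ℝ) : Prop :=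
  Measurable f ∧
  (∀ K : Set (Matrix (Fin m) (Fin n) ℝ), IsCompact K → ∃ C : ℝ, ∀ X ∈ K, |f X| ≤ C) ∧
  ∀ Ω : Set (Fin n → ℝ), IsOpen Ω → Ω.Nonempty → Bornology.IsBounded Ω →
    ∀ (X₀ : Matrix (Fin m) (Fin n) ℝ) (φ : (Fin n → ℝ) → (Fin m → ℝ)),
      ContDiff ℝ (⊤ : ℕ∞) φ → HasCompactSupport φ → tsupport φ ⊆ Ω →
      f X₀ * (volume Ω).toReal ≤ ∫ x in Ω, f (X₀ + jacobianM m n φ x)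

/-- `f : ℝ^{m×n} → ℝ` is rank-one convex. -/
def IsRankOneConvex {m n : ℕ} (f : Matrix (Fin m) (Fin n) ℝ → ℝ) : Prop :=
  ∀ X Y : Matrix (Fin m) (Fin n) ℝ, (X - Y).rank ≤ 1 →
    ∀ t : ℝ, t ∈ Set.Icc (0 : ℝ) 1 →
      f (t • X + (1 - t) • Y) ≤ t * f X + (1 - t) * f Y

/-- The barycentre `μ̄ = ∫ X dμ(X)`, computed entrywise. -/
def matBarycenter {m n : ℕ} (μ : Measure (Matrix (Fin m) (Fin n) ℝ)) :
    Matrix (Fin m) (Fin n) ℝ :=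
  Matrix.of fun i j => ∫ X, X i j ∂μ

/-- `M^{2×n}_tri`: second row is `(0, …, 0, a)`. -/
def Mtri (n : ℕ) : Set (Matrix (Fin 2) (Fin n) ℝ) :=
  {X | ∀ j : Fin n, (j : ℕ) + 1 < n → X 1 j = 0}

/-- `M^{2×n}_diag`: first row `(a₁, …, a_{n-1}, 0)`, second row `(0, …, 0, b)`. -/
def Mdiag (n : ℕ) : Set (Matrix (Fin 2) (Fin n) ℝ) :=
  {X | (∀ j : Fin n, (j : ℕ) + 1 < n → X 1 j = 0) ∧
       (∀ j : Fin n, (j : ℕ) + 1 = n → X 0 j = 0)}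

/-- The orthogonal projection of `ℝ^{2×n}` onto `M^{2×n}_diag`. -/
def Pdiag (n : ℕ) (X : Matrix (Fin 2) (Fin n) ℝ) : Matrix (Fin 2) (Fin n) ℝ :=
  Matrix.of fun i j =>
    if i = 0 then (if (j : ℕ) + 1 < n then X 0 j else 0)
    else (if (j : ℕ) + 1 = n then X 1 j else 0)

/-- A homogeneous gradient Young measure: a compactly supported Borel probability measure
satisfying Jensen's inequality for all quasiconvex functions. -/
def IsHomogeneousGradientYoungMeasure {m n : ℕ}
    (μ : Measure (Matrix (Fin m) (Fin n) ℝ)) : Prop :=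
  IsProbabilityMeasure μ ∧ (∃ K, IsCompact K ∧ μ Kᶜ = 0) ∧
  ∀ f : Matrix (Fin m) (Fin n) ℝ → ℝ, IsQuasiconvex f →
    f (matBarycenter μ) ≤ ∫ X, f X ∂μ

/-- A laminate: a compactly supported Borel probability measure
satisfying Jensen's inequality for all rank-one convex functions. -/
def IsLaminate {m n : ℕ} (μ : Measure (Matrix (Fin m) (Fin n) ℝ)) : Prop :=
  IsProbabilityMeasure μ ∧ (∃ K, IsCompact K ∧ μ Kᶜ = 0) ∧
  ∀ f : Matrix (Fin m) (Fin n) ℝ → ℝ, IsRankOneConvex f →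
    f (matBarycenter μ) ≤ ∫ X, f X ∂μ

/-- `M^{2×2}_+ = {X : X₁₂ > 0}`. -/
def Mplus : Set (Matrix (Fin 2) (Fin 2) ℝ) := {X | 0 < X 0 1}

/-- The partial Legendre transform `Ψ`. -/
def Psi (X : Matrix (Fin 2) (Fin 2) ℝ) : Matrix (Fin 2) (Fin 2) ℝ :=
  (X 0 1)⁻¹ • !![-(X 0 0), 1; -X.det, X 1 1]

/-- The dual function `h̃(X) = X₁₂ · h(Ψ(X))`. -/
def dualFn (h : Matrix (Fin 2) (Fin 2) ℝ → ℝ) (X : Matrix (Fin 2) (Fin 2) ℝ) : ℝ :=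
  X 0 1 * h (Psi X)

/-- The dual measure `μ̃`, characterised by
`∫ f dμ̃ = (1/μ̄₁₂) ∫ X₁₂ · f(Ψ(X)) dμ(X)` for all Borel `f : M → [0,∞]`. -/
def dualMeasure (μ : Measure (Matrix (Fin 2) (Fin 2) ℝ)) :
    Measure (Matrix (Fin 2) (Fin 2) ℝ) :=
  Measure.map Psi
    ((ENNReal.ofReal (matBarycenter μ 0 1))⁻¹ •
      μ.withDensity fun X => ENNReal.ofReal (X 0 1))

/-- The (topological) support of a measure. -/
def mSupport {α : Type*} [TopologicalSpace α] [MeasurableSpace α] (μ : Measure α) : Set α :=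
  {x | ∀ U : Set α, IsOpen U → x ∈ U → μ U ≠ 0}

/-- `f` is quasiconvex on the open set `U ⊆ ℝ^{2×2}`. -/
def IsQuasiconvexOn (U : Set (Matrix (Fin 2) (Fin 2) ℝ))
    (f : Matrix (Fin 2) (Fin 2) ℝ → ℝ) : Prop :=
  ∀ Ω : Set (Fin 2 → ℝ), IsOpen Ω → Ω.Nonempty → Bornology.IsBounded Ω →
    ∀ (A : Matrix (Fin 2) (Fin 2) ℝ) (φ : (Fin 2 → ℝ) → (Fin 2 → ℝ)),
      ContDiff ℝ (⊤ : ℕ∞) φ → HasCompactSupport φ → tsupport φ ⊆ Ω →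
      (∀ x, A + jacobianM 2 2 φ x ∈ U) →
      f A * (volume Ω).toReal ≤ ∫ x in Ω, f (A + jacobianM 2 2 φ x)

/-- `f` is rank-one convex on the open convex set `U ⊆ ℝ^{2×2}`. -/
def IsRankOneConvexOn (U : Set (Matrix (Fin 2) (Fin 2) ℝ))
    (f : Matrix (Fin 2) (Fin 2) ℝ → ℝ) : Prop :=
  ∀ X ∈ U, ∀ Y ∈ U, (X - Y).rank ≤ 1 →
    ∀ t : ℝ, t ∈ Set.Icc (0 : ℝ) 1 →
      f (t • X + (1 - t) • Y) ≤ t * f X + (1 - t) * f Y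

open scoped ENNReal

/-!
`Ψ` is an involution of `M₊` with `Ψ(X)₁₂ = 1 / X₁₂`, so reweighting by `X₁₂` and pushing
forward by `Ψ` twice multiplies by the density `X₁₂ · Ψ(X)₁₂ = 1`: the dual of `μ̃` is `μ`.
Moreover `X₁₂ · Ψ(X) = [[-X₁₁, 1], [-det X, X₂₂]]` and `X₁₂ · det Ψ(X) = -X₂₁` are affine in
`(X, det X)`, so integrating them against `μ` gives `μ̃‾ = Ψ(μ̄)` exactly when `μ` is polyconvex,
and `∫ det dμ̃ = -μ̄₂₁ / μ̄₁₂ = det Ψ(μ̄)`.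
-/

instance matrixBorelSpace : BorelSpace (Matrix (Fin 2) (Fin 2) ℝ) :=
  show BorelSpace (Fin 2 → Fin 2 → ℝ) from inferInstance

local notation "M₂" => Matrix (Fin 2) (Fin 2) ℝ

lemma continuous_Psi_numerator : Continuous fun X : M₂ => !![-(X 0 0), 1; -X.det, X 1 1] := by
  refine continuous_pi fun i => continuous_pi fun j => ?_
  fin_cases i <;> fin_cases j <;> (simp; fun_prop)

@[fun_prop]
lemma measurable_Psi : Measurable Psi := by
  unfold Psi
  have : Measurable fun X : M₂ => X 0 1 := by fun_prop
  exact this.inv.smul continuous_Psi_numerator.measurable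

lemma continuousOn_Psi : ContinuousOn Psi {X | X 0 1 ≠ 0} :=
  ((continuous_apply_apply 0 1).continuousOn.inv₀ fun _ hX => hX).smul
    continuous_Psi_numerator.continuousOn

lemma Psi_apply (X : M₂) (i j : Fin 2) :
    Psi X i j = (X 0 1)⁻¹ * !![-(X 0 0), 1; -X.det, X 1 1] i j := rfl

lemma det_Psi (X : M₂) : (Psi X).det = -((X 0 1)⁻¹ * X 1 0) := by
  rcases eq_or_ne (X 0 1) 0 with h | h
  · simp [Psi, h]
  · simp [Psi, Matrix.det_fin_two]
    field_simp
    ring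

lemma Psi_Psi {X : M₂} (h : X 0 1 ≠ 0) : Psi (Psi X) = X := by
  ext i j
  fin_cases i <;> fin_cases j <;> simp [Psi_apply, det_Psi, h]

@[simp]
lemma Psi_apply_zero_one (X : M₂) : Psi X 0 1 = (X 0 1)⁻¹ := by
  simp [Psi]

lemma Psi_mem_Mplus {X : M₂} (hX : X ∈ Mplus) : Psi X ∈ Mplus := by
  simpa [Mplus] using hX

lemma mul_Psi_apply {X : M₂} (hX : X 0 1 ≠ 0) (i j : Fin 2) :
    X 0 1 * Psi X i j = !![-(X 0 0), 1; -X.det, X 1 1] i j :=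
  mul_inv_cancel_left₀ hX _

lemma image_Psi_eq_inter_preimage {K : Set M₂} (hK : K ⊆ Mplus) : Psi '' K = Mplus ∩ Psi ⁻¹' K := by
  ext Y
  constructor
  · rintro ⟨X, hX, rfl⟩
    exact ⟨Psi_mem_Mplus (hK hX), by rwa [Set.mem_preimage, Psi_Psi (hK hX).ne']⟩
  · rintro ⟨hY, hYK⟩
    exact ⟨Psi Y, hYK, Psi_Psi (ne_of_gt hY)⟩

section DualMeasure

variable {μ : Measure M₂}

lemma lintegral_dualMeasure {f : M₂ → ℝ≥0∞} (hf : Measurable f) :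
    ∫⁻ Y, f Y ∂(dualMeasure μ) =
      (ENNReal.ofReal (matBarycenter μ 0 1))⁻¹ * ∫⁻ X, ENNReal.ofReal (X 0 1) * f (Psi X) ∂μ := by
  rw [dualMeasure, lintegral_map hf measurable_Psi, lintegral_smul_measure,
    lintegral_withDensity_eq_lintegral_mul μ (by fun_prop)
      (show Measurable fun X => f (Psi X) from hf.comp measurable_Psi)]
  rfl

lemma matBarycenter_zero_one_nonneg (hμ : ∀ᵐ X ∂μ, X ∈ Mplus) : 0 ≤ matBarycenter μ 0 1 :=
  integral_nonneg_of_ae <| hμ.mono fun _ hX => le_of_lt hX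

lemma matBarycenter_zero_one_pos [NeZero μ] (hμ : ∀ᵐ X ∂μ, X ∈ Mplus)
    (hint : Integrable (fun X : M₂ => X 0 1) μ) : 0 < matBarycenter μ 0 1 := by
  refine (integral_pos_iff_support_of_nonneg_ae (hμ.mono fun _ hX => le_of_lt hX) hint).2 <|
    pos_iff_ne_zero.2 fun h => NeZero.ne μ (ae_eq_bot.1 (Filter.eventually_false_iff_eq_bot.1 ?_))
  filter_upwards [hμ, measure_eq_zero_iff_ae_notMem.1 h] with X hX hX0
  exact hX0 (ne_of_gt hX)

lemma integral_dualMeasure (hμ : ∀ᵐ X ∂μ, X ∈ Mplus) {g : M₂ → ℝ} (hg : Measurable g) :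
    ∫ Y, g Y ∂(dualMeasure μ) = (matBarycenter μ 0 1)⁻¹ * ∫ X, X 0 1 * g (Psi X) ∂μ := by
  rw [dualMeasure, integral_map measurable_Psi.aemeasurable hg.aestronglyMeasurable,
    integral_smul_measure, ENNReal.toReal_inv,
    ENNReal.toReal_ofReal (matBarycenter_zero_one_nonneg hμ), smul_eq_mul,
    integral_withDensity_eq_integral_toReal_smul (by fun_prop)
      (ae_of_all _ fun _ => ENNReal.ofReal_lt_top)]
  congr 1
  refine integral_congr_ae (hμ.mono fun X hX => ?_)
  simp only [ENNReal.toReal_ofReal (le_of_lt hX), smul_eq_mul]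

lemma isProbabilityMeasure_dualMeasure [NeZero μ] (hμ : ∀ᵐ X ∂μ, X ∈ Mplus)
    (hint : Integrable (fun X : M₂ => X 0 1) μ) : IsProbabilityMeasure (dualMeasure μ) := by
  have hb := matBarycenter_zero_one_pos hμ hint
  have hmass : ∫⁻ X, ENNReal.ofReal (X 0 1) ∂μ = ENNReal.ofReal (matBarycenter μ 0 1) :=
    (ofReal_integral_eq_lintegral_ofReal hint (hμ.mono fun _ hX => le_of_lt hX)).symm
  constructor
  rw [← setLIntegral_one, Measure.restrict_univ, lintegral_dualMeasure measurable_const]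
  simp only [mul_one, hmass]
  exact ENNReal.inv_mul_cancel (ENNReal.ofReal_pos.2 hb).ne' ENNReal.ofReal_ne_top

lemma dualMeasure_compl_image_Psi {K : Set M₂} (hK : MeasurableSet K) (hKM : K ⊆ Mplus)
    (hμK : μ Kᶜ = 0) : dualMeasure μ (Psi '' K)ᶜ = 0 := by
  have hK' : MeasurableSet (Psi '' K) := by
    rw [image_Psi_eq_inter_preimage hKM]
    exact (measurableSet_lt measurable_const (by fun_prop)).inter (measurable_Psi hK)
  rw [dualMeasure, Measure.map_apply measurable_Psi hK'.compl, Measure.smul_apply]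
  refine (smul_eq_zero_of_right _ (withDensity_absolutelyContinuous μ _ ?_))
  exact measure_mono_null (fun X hX hXK => hX ⟨X, hXK, rfl⟩) hμK

lemma matBarycenter_dualMeasure_apply (hμ : ∀ᵐ X ∂μ, X ∈ Mplus) (i j : Fin 2) :
    matBarycenter (dualMeasure μ) i j =
      (matBarycenter μ 0 1)⁻¹ * ∫ X, !![-(X 0 0), 1; -X.det, X 1 1] i j ∂μ := by
  rw [matBarycenter, Matrix.of_apply, integral_dualMeasure hμ (by fun_prop)]
  congr 1
  exact integral_congr_ae (hμ.mono fun X hX => mul_Psi_apply (ne_of_gt hX) i j)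

lemma matBarycenter_dualMeasure [IsProbabilityMeasure μ] (hμ : ∀ᵐ X ∂μ, X ∈ Mplus)
    (hpc : ∫ X, X.det ∂μ = (matBarycenter μ).det) :
    matBarycenter (dualMeasure μ) = Psi (matBarycenter μ) := by
  ext i j
  rw [matBarycenter_dualMeasure_apply hμ]
  fin_cases i <;> fin_cases j <;> simp [Psi, integral_neg, hpc, matBarycenter]

lemma integral_det_dualMeasure (hμ : ∀ᵐ X ∂μ, X ∈ Mplus) :
    ∫ Y, Y.det ∂(dualMeasure μ) = (Psi (matBarycenter μ)).det := by
  rw [integral_dualMeasure hμ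
      (show Measurable fun Y : M₂ => Y.det from continuous_id.matrix_det.measurable),
    det_Psi, ← mul_neg]
  congr 1
  rw [matBarycenter, Matrix.of_apply, ← integral_neg]
  refine integral_congr_ae (hμ.mono fun X hX => ?_)
  show X 0 1 * (Psi X).det = -X 1 0
  rw [det_Psi, mul_neg, mul_inv_cancel_left₀ (hX : 0 < X 0 1).ne']

lemma dualMeasure_dualMeasure [IsProbabilityMeasure μ] (hμ : ∀ᵐ X ∂μ, X ∈ Mplus)
    (hint : Integrable (fun X : M₂ => X 0 1) μ) : dualMeasure (dualMeasure μ) = μ := by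
  have hb := matBarycenter_zero_one_pos hμ hint
  have hb' : matBarycenter (dualMeasure μ) 0 1 = (matBarycenter μ 0 1)⁻¹ := by
    simp [matBarycenter_dualMeasure_apply hμ]
  ext s hs
  have hind : Measurable (s.indicator (1 : M₂ → ℝ≥0∞)) := measurable_one.indicator hs
  rw [← lintegral_indicator_one hs, lintegral_dualMeasure hind,
    lintegral_dualMeasure (by fun_prop), hb', ENNReal.ofReal_inv_of_pos hb, inv_inv,
    ENNReal.mul_inv_cancel_left (ENNReal.ofReal_pos.2 hb).ne' ENNReal.ofReal_ne_top,
    ← lintegral_indicator_one hs]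
  refine lintegral_congr_ae (hμ.mono fun X hX => ?_)
  simp only [Psi_Psi (ne_of_gt hX), Psi_apply_zero_one]
  rw [← mul_assoc, ← ENNReal.ofReal_mul (le_of_lt hX),
    mul_inv_cancel₀ (ne_of_gt hX), ENNReal.ofReal_one, one_mul]

end DualMeasure

/-- The map `μ ↦ μ̃` maps the polyconvex measures with compact support in `M^{2×2}_+`
bijectively onto themselves, and is an involution on this set. -/
theorem dualMeasure_polyconvex
    (μ : Measure (Matrix (Fin 2) (Fin 2) ℝ))
    (hprob : IsProbabilityMeasure μ)
    (hsupp : ∃ K : Set (Matrix (Fin 2) (Fin 2) ℝ), IsCompact K ∧ K ⊆ Mplus ∧ μ Kᶜ = 0)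
    (hpc : ∫ X, X.det ∂μ = (matBarycenter μ).det) :
    IsProbabilityMeasure (dualMeasure μ) ∧
    (∃ K : Set (Matrix (Fin 2) (Fin 2) ℝ), IsCompact K ∧ K ⊆ Mplus ∧
      (dualMeasure μ) Kᶜ = 0) ∧
    (∫ X, X.det ∂(dualMeasure μ) = (matBarycenter (dualMeasure μ)).det) ∧
    dualMeasure (dualMeasure μ) = μ := by
  obtain ⟨K, hKc, hKM, hμK⟩ := hsupp
  have hμ : ∀ᵐ X ∂μ, X ∈ Mplus := Filter.mem_of_superset (mem_ae_iff.2 hμK) hKM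
  have hint : Integrable (fun X : M₂ => X 0 1) μ := by
    rw [← Measure.restrict_eq_self_of_ae_mem (mem_ae_iff.2 hμK)]
    exact (continuous_apply_apply 0 1).continuousOn.integrableOn_compact hKc
  refine ⟨isProbabilityMeasure_dualMeasure hμ hint,
    ⟨Psi '' K, hKc.image_of_continuousOn (continuousOn_Psi.mono fun X hX => ne_of_gt (hKM hX)),
      fun _ ⟨X, hX, hXY⟩ => hXY ▸ Psi_mem_Mplus (hKM hX),
      dualMeasure_compl_image_Psi hKc.measurableSet hKM hμK⟩, ?_,
    dualMeasure_dualMeasure hμ hint⟩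
  rw [integral_det_dualMeasure hμ, matBarycenter_dualMeasure hμ hpc]

end
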